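/- If q is a composite positive integer and J_q is a prime number, then q = 4 (and hence J_q = 5). In other words, 5 = J_4 is the only Jacobsthal prime with composite index. -/
import Mathlib


/-- The Jacobsthal sequence: J 0 = 0, J 1 = 1, J (k+2) = J (k+1) + 2 * J k. -/
def J : ℕ → ℕ
  | 0 => 0
  | 1 => 1
  | (k + 2) => J (k + 1) + 2 * J k

lemma J_pos : ∀ n, 1 ≤ n → 0 < J n
  | 1, _ => by simp [J]
  | 2, _ => by simp [J]
  | (n + 3), _ => by
      have := J_pos (n + 2) (by omega)
      show 0 < J (n + 2) + 2 * J (n + 1)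
      omega

lemma J_add : ∀ m n, J (m + n + 1) = J (m + 1) * J (n + 1) + 2 * (J m * J n)
  | 0, n => by simp [J]
  | 1, n => by
      rw [show 1 + n + 1 = n + 2 from by omega]
      show J (n + 2) = J 2 * J (n + 1) + 2 * (J 1 * J n)
      simp [J]
  | (m + 2), n => by
      have h1 := J_add (m + 1) n
      have h0 := J_add m n
      have e : m + 2 + n + 1 = (m + n + 1) + 2 := by omega
      have e1 : m + 1 + n + 1 = (m + n + 1) + 1 := by omega
      rw [e, show J ((m+n+1)+2) = J ((m+n+1)+1) + 2 * J (m+n+1) from rfl,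
        ← e1, h1, h0, show J (m + 2 + 1) = J (m + 2) + 2 * J (m+1) from rfl,
        show J (m + 2) = J (m + 1) + 2 * J m from rfl]
      ring

lemma J_dvd (m : ℕ) : ∀ k, J m ∣ J (m * k)
  | 0 => by simp [J]
  | (k + 1) => by
      have ih := J_dvd m k
      match m, ih with
      | 0, _ => simp [J]
      | (m' + 1), ih =>
        have : (m' + 1) * (k + 1) = (m' + 1) * k + m' + 1 := by ring
        rw [this, J_add]
        exact dvd_add (Dvd.intro_left _ rfl) (Dvd.dvd.mul_left (ih.mul_right _) 2)

lemma J_lt : ∀ n, 2 ≤ n → J n < J (n + 1)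
  | (n + 2), _ => by
      have h := J_pos (n + 1) (by omega)
      show J (n + 2) < J (n + 2) + 2 * J (n + 1)
      omega

lemma J_mono {m n : ℕ} (hm : 2 ≤ m) (h : m < n) : J m < J n := by
  induction n with
  | zero => omega
  | succ n ih =>
      rcases Nat.lt_or_ge m n with h' | h'
      · exact lt_trans (ih h') (J_lt n (by omega))
      · have : m = n := by omega
        subst this
        exact J_lt m hm

lemma J_ge3 : ∀ n, 3 ≤ n → 3 ≤ J n := by
  intro n hn
  have : J 3 = 3 := by simp [J]
  rcases Nat.lt_or_ge 3 n with h | h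
  · have := J_mono (by omega : (2:ℕ) ≤ 3) h
    omega
  · have : n = 3 := by omega
    subst this; omega

theorem jacobsthal_prime_composite_index (q : ℕ) (hq : 1 < q) (hcomp : ¬ q.Prime)
    (hprime : (J q).Prime) : q = 4 ∧ J q = 5 := by
  -- no divisor d of q with 3 ≤ d < q
  have key : ∀ d, d ∣ q → 3 ≤ d → d < q → False := by
    intro d hd hd3 hdq
    obtain ⟨k, hk⟩ := hd
    have hdvd : J d ∣ J q := hk ▸ J_dvd d k
    rcases (Nat.Prime.eq_one_or_self_of_dvd hprime _ hdvd) with h1 | h2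
    · have := J_ge3 d hd3; omega
    · have := J_mono (by omega : 2 ≤ d) hdq
      omega
  have hp := Nat.minFac_prime (by omega : q ≠ 1)
  have hpd : q.minFac ∣ q := Nat.minFac_dvd q
  have hplt : q.minFac < q := by
    have hle : q.minFac ≤ q := Nat.minFac_le (by omega)
    rcases lt_or_eq_of_le hle with h | h
    · exact h
    · exact absurd (h ▸ hp) hcomp
  have hp2 : q.minFac = 2 := by
    by_contra h
    have : 3 ≤ q.minFac := by have := hp.two_le; omega
    exact key _ hpd this hplt
  obtain ⟨m, hm⟩ := hpd
  rw [hp2] at hm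
  have hm2 : 2 ≤ m := by
    by_contra h
    push_neg at h
    interval_cases m
    · omega
    · exact hcomp (by rw [show q = 2 by omega]; exact Nat.prime_two)
  have hmq : m < q := by omega
  have hmd : m ∣ q := ⟨2, by omega⟩
  have : m = 2 := by
    by_contra h
    exact key m hmd (by omega) hmq
  have hq4 : q = 4 := by omega
  subst hq4
  exact ⟨rfl, by simp [J]⟩
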